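/- Let p, q ≥ 1, N = p + q, and let (t_i, a_i)_{i=1}^r be a good parameter satisfying the nonvanishing condition, such that every rational occurs at most twice in ν. Then: (a) if q_j = 0, the multisets ν_{≤j} = ν_{<j} ⊔ ν_j and ν_{>j} are multiplicity-free of cardinalities p and q respectively; (b) if q_j ≥ 1 and p_j equals the number of elements of ν_j lying in ν_{>j}, then the multisets ν_{<j} ⊔ (ν_j ∩ ν_{>j}) and ν_{≥j} ∖ (ν_j ∩ ν_{>j}) are multiplicity-free of cardinalities p and q respectively, where ν_{≥j} = ν_j ⊔ ν_{>j} and ν_j ∩ ν_{>j} denotes the set of common elements, one copy of each being removed in the difference; (c) if q_j ≥ 1 and q_j equals the number of elements of ν_j lying in ν_{<j}, then the multisets ν_{≤j} ∖ (ν_{<j} ∩ ν_j) and (ν_{<j} ∩ ν_j) ⊔ ν_{>j} are multiplicity-free of cardinalities p and q respectively. -/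

import Mathlib

/-!
Each `ν_i` is a segment, so it is multiplicity-free. Since no rational occurs three times in
`ν = ν_{<j} + ν_j + ν_{>j}`, no element of `ν_j` lies in both `ν_{<j}` and `ν_{>j}`; hence moving
`ν_j ∩ ν_{>j}` to the left block, or `ν_{<j} ∩ ν_j` to the right block, keeps both blocks
multiplicity-free, and what is left behind is a union `s + t - s ∩ t = s ∪ t` of two
multiplicity-free multisets. The cardinalities follow from `|ν_{<j}| < p ≤ |ν_{≤j}|` and
`|ν| = p + q`.
-/

open Finset

/-- The multiset `P(λ) = {λ_i − (N−1)/2 + (p−i) : 1 ≤ i ≤ p}` of rationals,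
for `N = p + q` and a weight `λ : ℕ → ℤ` (1-based indexing). -/
def Pms (p q : ℕ) (lam : ℕ → ℤ) : Multiset ℚ :=
  (Finset.Icc 1 p).val.map
    (fun i => (lam i : ℚ) - ((p : ℚ) + (q : ℚ) - 1) / 2 + ((p : ℚ) - (i : ℚ)))

/-- The multiset `Q(λ) = {λ_{p+i} + (N−1)/2 − (i−1) : 1 ≤ i ≤ q}`. -/
def Qms (p q : ℕ) (lam : ℕ → ℤ) : Multiset ℚ :=
  (Finset.Icc 1 q).val.map
    (fun i => (lam (p + i) : ℚ) + ((p : ℚ) + (q : ℚ) - 1) / 2 - ((i : ℚ) - 1))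

/-- Dominance: `λ_1 ≥ … ≥ λ_p` and `λ_{p+1} ≥ … ≥ λ_{p+q}`. -/
def Dominant (p q : ℕ) (lam : ℕ → ℤ) : Prop :=
  (∀ i, 1 ≤ i → i < p → lam (i + 1) ≤ lam i) ∧
  (∀ i, p + 1 ≤ i → i < p + q → lam (i + 1) ≤ lam i)

/-- `p' = #{i : 1 ≤ i ≤ p, λ_i = λ_p}`. -/
def pPrime (p : ℕ) (lam : ℕ → ℤ) : ℕ :=
  ((Finset.Icc 1 p).filter (fun i => lam i = lam p)).card

/-- `q' = #{i : p+1 ≤ i ≤ p+q, λ_i = λ_{p+1}}`. -/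
def qPrime (p q : ℕ) (lam : ℕ → ℤ) : ℕ :=
  ((Finset.Icc (p + 1) (p + q)).filter (fun i => lam i = lam (p + 1))).card

/-- The segment `P' = {λ_p − (N−1)/2 + k : 0 ≤ k ≤ p'−1}`. -/
def Pseg (p q : ℕ) (lam : ℕ → ℤ) : Finset ℚ :=
  (Finset.range (pPrime p lam)).image
    (fun k : ℕ => (lam p : ℚ) - ((p : ℚ) + (q : ℚ) - 1) / 2 + (k : ℚ))

/-- The segment `Q' = {λ_{p+1} + (N−1)/2 − k : 0 ≤ k ≤ q'−1}`. -/
def Qseg (p q : ℕ) (lam : ℕ → ℤ) : Finset ℚ :=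
  (Finset.range (qPrime p q lam)).image
    (fun k : ℕ => (lam (p + 1) : ℚ) + ((p : ℚ) + (q : ℚ) - 1) / 2 - (k : ℚ))

/-- `I = P' ∩ Q'`. -/
def Iseg (p q : ℕ) (lam : ℕ → ℤ) : Finset ℚ := Pseg p q lam ∩ Qseg p q lam

/-- A good parameter `(t_1,a_1),…,(t_r,a_r)` for `U(p,q)` (1-based indexing). -/
structure GoodParam (p q r : ℕ) (t : ℕ → ℤ) (a : ℕ → ℕ) : Prop where
  hr : 1 ≤ r
  hpos : ∀ i ∈ Finset.Icc 1 r, 0 < a i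
  hsum : ∑ i ∈ Finset.Icc 1 r, a i = p + q
  heven : ∀ i ∈ Finset.Icc 1 r, Even (t i + (a i : ℤ) + (p : ℤ) + (q : ℤ))
  hdec : ∀ i, 1 ≤ i → i < r → t (i + 1) ≤ t i
  hadec : ∀ i, 1 ≤ i → i < r → t i = t (i + 1) → a (i + 1) ≤ a i

/-- The segment `ν_i = {(t_i − a_i + 1)/2 + k : 0 ≤ k ≤ a_i − 1}` as a multiset of rationals. -/
def nu (t : ℕ → ℤ) (a : ℕ → ℕ) (i : ℕ) : Multiset ℚ :=
  (Multiset.range (a i)).map (fun k => ((t i : ℚ) - (a i : ℚ) + 1) / 2 + (k : ℚ))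

/-- `ν_{<j} = ν_1 ⊔ … ⊔ ν_{j−1}`. -/
def nuLt (t : ℕ → ℤ) (a : ℕ → ℕ) (j : ℕ) : Multiset ℚ :=
  ∑ k ∈ Finset.Icc 1 (j - 1), nu t a k

/-- `ν_{>j} = ν_{j+1} ⊔ … ⊔ ν_r`. -/
def nuGt (t : ℕ → ℤ) (a : ℕ → ℕ) (r j : ℕ) : Multiset ℚ :=
  ∑ k ∈ Finset.Icc (j + 1) r, nu t a k

/-- `ν = ν_1 ⊔ … ⊔ ν_r`. -/
def nuAll (t : ℕ → ℤ) (a : ℕ → ℕ) (r : ℕ) : Multiset ℚ :=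
  ∑ k ∈ Finset.Icc 1 r, nu t a k

/-- `j` is the least index with `a_1 + … + a_j ≥ p`. -/
structure LeastJ (p r : ℕ) (a : ℕ → ℕ) (j : ℕ) : Prop where
  h1 : 1 ≤ j
  hle : j ≤ r
  hge : p ≤ ∑ ℓ ∈ Finset.Icc 1 j, a ℓ
  hmin : ∀ i, i < j → ∑ ℓ ∈ Finset.Icc 1 i, a ℓ < p

/-- `p_j = p − (a_1 + … + a_{j−1})`. -/
def pj (p : ℕ) (a : ℕ → ℕ) (j : ℕ) : ℕ := p - ∑ ℓ ∈ Finset.Icc 1 (j - 1), a ℓ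

/-- `q_j = q − (a_{j+1} + … + a_r)`. -/
def qj (q r : ℕ) (a : ℕ → ℕ) (j : ℕ) : ℕ := q - ∑ ℓ ∈ Finset.Icc (j + 1) r, a ℓ

/-- The nonvanishing condition: `ν_{<j}` and `ν_{>j}` are multiplicity free,
`#(ν_j ∩ ν_{<j}) ≤ q_j` and `#(ν_j ∩ ν_{>j}) ≤ p_j`. -/
def NonVanishing (p q r : ℕ) (t : ℕ → ℤ) (a : ℕ → ℕ) (j : ℕ) : Prop :=
  (nuLt t a j).Nodup ∧ (nuGt t a r j).Nodup ∧
  Multiset.card ((nu t a j).filter (fun x => x ∈ nuLt t a j)) ≤ qj q r a j ∧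
  Multiset.card ((nu t a j).filter (fun x => x ∈ nuGt t a r j)) ≤ pj p a j

namespace Multiset

variable {α : Type*} [DecidableEq α]

theorem Nodup.filter_mem_eq_inter {s : Multiset α} (hs : s.Nodup) (t : Multiset α) :
    s.filter (· ∈ t) = s ∩ t := by
  ext x
  rw [count_filter, count_inter]
  split_ifs with hx
  · exact (min_eq_left ((nodup_iff_count_le_one.mp hs x).trans (count_pos.mpr hx))).symm
  · rw [count_eq_zero.mpr hx, _root_.min_zero]

theorem nodup_add_sub_inter {s t : Multiset α} (hs : s.Nodup) (ht : t.Nodup) :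
    (s + t - s ∩ t).Nodup := by
  rw [← union_add_inter, add_tsub_cancel_right]
  exact nodup_union.mpr ⟨hs, ht⟩

theorem disjoint_inter_of_count_le_two {s t u : Multiset α}
    (h : ∀ x, count x (s + t + u) ≤ 2) : Disjoint s (t ∩ u) := by
  refine disjoint_left.mpr fun {x} hs htu => ?_
  rw [mem_inter] at htu
  have hs := count_pos.mpr hs
  have ht := count_pos.mpr htu.1
  have hu := count_pos.mpr htu.2
  have := h x
  rw [count_add, count_add] at this
  omega

end Multiset

theorem Finset.sum_Icc_one_eq_add_add {M : Type*} [AddCommMonoid M] (f : ℕ → M) {j r : ℕ}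
    (h1 : 1 ≤ j) (h2 : j ≤ r) :
    ∑ i ∈ Icc 1 r, f i = ∑ i ∈ Icc 1 (j - 1), f i + f j + ∑ i ∈ Icc (j + 1) r, f i := by
  have e1 : Icc 1 r = Ioc 0 r := by rw [← Icc_add_one_left_eq_Ioc]; rfl
  have e2 : Icc 1 (j - 1) = Ioc 0 (j - 1) := by rw [← Icc_add_one_left_eq_Ioc]; rfl
  have e3 : Icc (j + 1) r = Ioc j r := by rw [← Icc_add_one_left_eq_Ioc]
  have e4 : Ioc (j - 1) j = {j} := by ext x; simp; omega
  rw [e1, e2, e3, ← sum_Ioc_consecutive f (Nat.zero_le j) h2,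
    ← sum_Ioc_consecutive f (Nat.zero_le (j - 1)) (Nat.sub_le j 1), e4, sum_singleton]

section Segments

variable (t : ℕ → ℤ) (a : ℕ → ℕ)

-- `nu` elaborates with `Multiset.range (a i)` coerced to `Multiset ℚ` through its monad structure.
theorem nu_eq_map (i : ℕ) :
    nu t a i = (Multiset.range (a i)).map fun k : ℕ => ((t i : ℚ) - a i + 1) / 2 + k := by
  simp [nu, Multiset.map_map]

theorem nu_nodup (i : ℕ) : (nu t a i).Nodup := by
  rw [nu_eq_map]
  exact (Multiset.nodup_range _).map fun k₁ k₂ h => by simpa using h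

theorem card_nu (i : ℕ) : Multiset.card (nu t a i) = a i := by
  simp [nu]

theorem card_nuLt (j : ℕ) : Multiset.card (nuLt t a j) = ∑ ℓ ∈ Icc 1 (j - 1), a ℓ := by
  simp only [nuLt, Multiset.card_sum, card_nu]

theorem card_nuGt (r j : ℕ) : Multiset.card (nuGt t a r j) = ∑ ℓ ∈ Icc (j + 1) r, a ℓ := by
  simp only [nuGt, Multiset.card_sum, card_nu]

theorem nuAll_eq_add {r j : ℕ} (h1 : 1 ≤ j) (h2 : j ≤ r) :
    nuAll t a r = nuLt t a j + nu t a j + nuGt t a r j :=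
  sum_Icc_one_eq_add_add (nu t a) h1 h2

end Segments

section Decomposition

open Multiset

variable {p q r j : ℕ} {t : ℕ → ℤ} {a : ℕ → ℕ}

variable (t) in
theorem LeastJ.card_nuLt_lt (hj : LeastJ p r a j) : card (nuLt t a j) < p := by
  rw [card_nuLt]
  exact hj.hmin _ (by have := hj.h1; omega)

variable (t) in
theorem LeastJ.le_card_nuLt_add_card_nu (hj : LeastJ p r a j) :
    p ≤ card (nuLt t a j) + card (nu t a j) := by
  simpa [card_nuLt, card_nu, sum_Icc_one_eq_add_add a hj.h1 le_rfl] using hj.hge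

theorem GoodParam.card_nuLt_add_card_nu_add_card_nuGt (hgp : GoodParam p q r t a)
    (hj : LeastJ p r a j) :
    card (nuLt t a j) + card (nu t a j) + card (nuGt t a r j) = p + q := by
  rw [card_nuLt, card_nu, card_nuGt, ← sum_Icc_one_eq_add_add a hj.h1 hj.hle, hgp.hsum]

variable (t) in
theorem pj_eq_sub_card : pj p a j = p - card (nuLt t a j) := by
  rw [card_nuLt, pj]

variable (t) in
theorem qj_eq_sub_card : qj q r a j = q - card (nuGt t a r j) := by
  rw [card_nuGt, qj]

theorem nodup_nuLt_add_nu_of_qj_eq_zero (hgp : GoodParam p q r t a) (hj : LeastJ p r a j)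
    (hL : (nuLt t a j).Nodup) (hG : (nuGt t a r j).Nodup)
    (hVL : card (nu t a j ∩ nuLt t a j) ≤ qj q r a j) (hq0 : qj q r a j = 0) :
    (nuLt t a j + nu t a j).Nodup ∧ card (nuLt t a j + nu t a j) = p ∧
      (nuGt t a r j).Nodup ∧ card (nuGt t a r j) = q := by
  rw [hq0, Nat.le_zero, Multiset.card_eq_zero, Multiset.inter_comm,
    inter_eq_zero_iff_disjoint] at hVL
  rw [qj_eq_sub_card t] at hq0
  have := hj.le_card_nuLt_add_card_nu t
  have := hgp.card_nuLt_add_card_nu_add_card_nuGt hj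
  refine ⟨nodup_add.mpr ⟨hL, nu_nodup t a j, hVL⟩, ?_, hG, by omega⟩
  rw [card_add]
  omega

theorem nodup_nuLt_add_inter_nuGt_of_pj_eq_card (hgp : GoodParam p q r t a)
    (hj : LeastJ p r a j) (hL : (nuLt t a j).Nodup) (hG : (nuGt t a r j).Nodup)
    (htwo : ∀ x, count x (nuLt t a j + nu t a j + nuGt t a r j) ≤ 2)
    (hpj : pj p a j = card (nu t a j ∩ nuGt t a r j)) :
    (nuLt t a j + nu t a j ∩ nuGt t a r j).Nodup ∧
      card (nuLt t a j + nu t a j ∩ nuGt t a r j) = p ∧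
      (nu t a j + nuGt t a r j - nu t a j ∩ nuGt t a r j).Nodup ∧
      card (nu t a j + nuGt t a r j - nu t a j ∩ nuGt t a r j) = q := by
  have hV := nu_nodup t a j
  have hle : nu t a j ∩ nuGt t a r j ≤ nu t a j + nuGt t a r j :=
    inter_le_left.trans (le_add_right _ _)
  rw [pj_eq_sub_card t] at hpj
  have := hj.card_nuLt_lt t
  have := hgp.card_nuLt_add_card_nu_add_card_nuGt hj
  refine ⟨nodup_add.mpr ⟨hL, hV.inter_left _, disjoint_inter_of_count_le_two htwo⟩, ?_,
    nodup_add_sub_inter hV hG, ?_⟩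
  · rw [card_add]
    omega
  · rw [card_sub hle, card_add]
    omega

theorem nodup_add_sub_inter_nuLt_of_qj_eq_card (hgp : GoodParam p q r t a)
    (hj : LeastJ p r a j) (hL : (nuLt t a j).Nodup) (hG : (nuGt t a r j).Nodup)
    (htwo : ∀ x, count x (nuLt t a j + nu t a j + nuGt t a r j) ≤ 2)
    (hqj : qj q r a j = card (nu t a j ∩ nuLt t a j)) :
    (nuLt t a j + nu t a j - nu t a j ∩ nuLt t a j).Nodup ∧
      card (nuLt t a j + nu t a j - nu t a j ∩ nuLt t a j) = p ∧
      (nu t a j ∩ nuLt t a j + nuGt t a r j).Nodup ∧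
      card (nu t a j ∩ nuLt t a j + nuGt t a r j) = q := by
  have hV := nu_nodup t a j
  have hle : nu t a j ∩ nuLt t a j ≤ nuLt t a j + nu t a j :=
    inter_le_left.trans (le_add_left _ _)
  have hdisj : Disjoint (nu t a j ∩ nuLt t a j) (nuGt t a r j) := by
    refine (disjoint_inter_of_count_le_two fun x => ?_).symm
    have := htwo x
    simp only [count_add] at this ⊢
    omega
  rw [qj_eq_sub_card t] at hqj
  have := hj.le_card_nuLt_add_card_nu t
  have := hgp.card_nuLt_add_card_nu_add_card_nuGt hj
  refine ⟨?_, ?_, nodup_add.mpr ⟨hV.inter_left _, hG, hdisj⟩, ?_⟩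
  · rw [add_comm]
    exact nodup_add_sub_inter hV hL
  · rw [card_sub hle, card_add]
    omega
  · rw [card_add]
    omega

end Decomposition

theorem statement15_general (p q r j : ℕ) (t : ℕ → ℤ) (a : ℕ → ℕ)
    (hgp : GoodParam p q r t a) (hj : LeastJ p r a j)
    (hnv : NonVanishing p q r t a j)
    (hmult : ∀ x : ℚ, Multiset.count x (nuAll t a r) ≤ 2) :
    (qj q r a j = 0 →
      ((nuLt t a j + nu t a j).Nodup ∧
       Multiset.card (nuLt t a j + nu t a j) = p ∧
       (nuGt t a r j).Nodup ∧
       Multiset.card (nuGt t a r j) = q)) ∧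
    (1 ≤ qj q r a j →
      pj p a j = Multiset.card ((nu t a j).filter (fun x => x ∈ nuGt t a r j)) →
      ((nuLt t a j + (nu t a j).filter (fun x => x ∈ nuGt t a r j)).Nodup ∧
       Multiset.card (nuLt t a j + (nu t a j).filter (fun x => x ∈ nuGt t a r j)) = p ∧
       ((nu t a j + nuGt t a r j) - (nu t a j).filter (fun x => x ∈ nuGt t a r j)).Nodup ∧
       Multiset.card
        ((nu t a j + nuGt t a r j) - (nu t a j).filter (fun x => x ∈ nuGt t a r j)) = q)) ∧
    (1 ≤ qj q r a j →
      qj q r a j = Multiset.card ((nu t a j).filter (fun x => x ∈ nuLt t a j)) →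
      (((nuLt t a j + nu t a j) - (nu t a j).filter (fun x => x ∈ nuLt t a j)).Nodup ∧
       Multiset.card
        ((nuLt t a j + nu t a j) - (nu t a j).filter (fun x => x ∈ nuLt t a j)) = p ∧
       ((nu t a j).filter (fun x => x ∈ nuLt t a j) + nuGt t a r j).Nodup ∧
       Multiset.card ((nu t a j).filter (fun x => x ∈ nuLt t a j) + nuGt t a r j) = q)) := by
  obtain ⟨hL, hG, hVL, -⟩ := hnv
  have htwo : ∀ x, Multiset.count x (nuLt t a j + nu t a j + nuGt t a r j) ≤ 2 := by
    simpa only [nuAll_eq_add t a hj.h1 hj.hle] using hmult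
  simp only [(nu_nodup t a j).filter_mem_eq_inter] at hVL ⊢
  exact ⟨nodup_nuLt_add_nu_of_qj_eq_zero hgp hj hL hG hVL,
    fun _ => nodup_nuLt_add_inter_nuGt_of_pj_eq_card hgp hj hL hG htwo,
    fun _ => nodup_add_sub_inter_nuLt_of_qj_eq_card hgp hj hL hG htwo⟩

/-- under nonvanishing and multiplicity at most two in `ν`:
(a) if `q_j = 0` then `ν_{≤j}` and `ν_{>j}` are multiplicity free of cardinalities `p`, `q`;
(b) if `q_j ≥ 1` and `p_j = #(ν_j ∩ ν_{>j})` then `ν_{<j} ⊔ (ν_j ∩ ν_{>j})` and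
`ν_{≥j} ∖ (ν_j ∩ ν_{>j})` are multiplicity free of cardinalities `p`, `q`;
(c) if `q_j ≥ 1` and `q_j = #(ν_j ∩ ν_{<j})` then `ν_{≤j} ∖ (ν_{<j} ∩ ν_j)` and
`(ν_{<j} ∩ ν_j) ⊔ ν_{>j}` are multiplicity free of cardinalities `p`, `q`. -/
theorem statement15 (p q r j : ℕ) (hp : 1 ≤ p) (hq : 1 ≤ q) (t : ℕ → ℤ) (a : ℕ → ℕ)
    (hgp : GoodParam p q r t a) (hj : LeastJ p r a j)
    (hnv : NonVanishing p q r t a j)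
    (hmult : ∀ x : ℚ, Multiset.count x (nuAll t a r) ≤ 2) :
    (qj q r a j = 0 →
      ((nuLt t a j + nu t a j).Nodup ∧
       Multiset.card (nuLt t a j + nu t a j) = p ∧
       (nuGt t a r j).Nodup ∧
       Multiset.card (nuGt t a r j) = q)) ∧
    (1 ≤ qj q r a j →
      pj p a j = Multiset.card ((nu t a j).filter (fun x => x ∈ nuGt t a r j)) →
      ((nuLt t a j + (nu t a j).filter (fun x => x ∈ nuGt t a r j)).Nodup ∧
       Multiset.card (nuLt t a j + (nu t a j).filter (fun x => x ∈ nuGt t a r j)) = p ∧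
       ((nu t a j + nuGt t a r j) - (nu t a j).filter (fun x => x ∈ nuGt t a r j)).Nodup ∧
       Multiset.card
        ((nu t a j + nuGt t a r j) - (nu t a j).filter (fun x => x ∈ nuGt t a r j)) = q)) ∧
    (1 ≤ qj q r a j →
      qj q r a j = Multiset.card ((nu t a j).filter (fun x => x ∈ nuLt t a j)) →
      (((nuLt t a j + nu t a j) - (nu t a j).filter (fun x => x ∈ nuLt t a j)).Nodup ∧
       Multiset.card
        ((nuLt t a j + nu t a j) - (nu t a j).filter (fun x => x ∈ nuLt t a j)) = p ∧
       ((nu t a j).filter (fun x => x ∈ nuLt t a j) + nuGt t a r j).Nodup ∧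
       Multiset.card ((nu t a j).filter (fun x => x ∈ nuLt t a j) + nuGt t a r j) = q)) :=
  statement15_general p q r j t a hgp hj hnv hmult
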